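/- arXiv:2103.00525 — 2 statements merged into one kernel-verified Lean document; each statement's English description precedes it below -/
import Mathlib

section
/- Let 4 ≤ l ≤ k with 5 ≤ k. Then the ℂ-vector space dimension of ℂ⟦x,y,z⟧/⟨f, g, M₁, M₂, M₃⟩ equals k + l + 1; that is, the Tjurina number of the space curve singularity FT_{k,l} is k + l + 1. -/
/-- Coefficientwise formal partial derivative ∂f/∂xᵢ of a formal power series. -/
noncomputable def pd (i : Fin 3) (f : MvPowerSeries (Fin 3) ℂ) :
    MvPowerSeries (Fin 3) ℂ :=
  fun α => ((α i : ℂ) + 1) * MvPowerSeries.coeff (α + Finsupp.single i 1) f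

/-!
Write `k = p + 5` and `l = q + 4`, so that `f = xy + z^(q+3)` and `g = xz + yz² + y^(p+4)`.
Elementary combinations of `f`, `g` and the minors put the nine monomials `x²`, `xy²`, `xyz`,
`xz²`, `y^(p+5)`, `z^(q+4)`, `y²z²`, `yz³`, `y³z` into the Tjurina ideal `I`, and show that modulo
`I` the monomials `xy`, `xz`, `y²z`, `yz²` are multiples of `z^(q+3)` or `y^(p+4)`. Hence the
`p + q + 10 = k + l + 1` monomials `x`, `yz`, `1, y, …, y^(p+4)`, `z, …, z^(q+3)` span `R/I`;
power series cause no trouble, because `I` contains every monomial of large degree.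

They are independent because each has a dual functional vanishing on `I`: its own coefficient,
corrected at `y^(p+4)` by the coefficients of `yz²`, `xz` and at `z^(q+3)` by those of `y²z`, `xy`.
No generator has a monomial strictly below the exponents involved, so such a functional takes
the value `h(0) · φ(s)` on a product `h · s`, and it suffices that it vanishes on the generators.
-/

open MvPowerSeries Finsupp

theorem Ideal.map_eq_zero_of_mem_span {R M F : Type*} [CommSemiring R] [AddCommMonoid M]
    [FunLike F R M] [AddMonoidHomClass F R M] (φ : F) {S : Set R}
    (hS : ∀ s ∈ S, ∀ r, φ (r * s) = 0) {x : R} (hx : x ∈ Ideal.span S) : φ x = 0 := by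
  suffices ∀ r, φ (r * x) = 0 by simpa using this 1
  induction hx using Submodule.span_induction with
  | mem s hs => exact hS s hs
  | zero => simp
  | add u v _ _ hu hv => intro r; rw [mul_add, map_add, hu, hv, add_zero]
  | smul a u _ hu => intro r; rw [smul_eq_mul, ← mul_assoc]; exact hu _

theorem Submodule.natCast_mul_mem_iff {K A : Type*} [Field K] [CharZero K] [Ring A]
    [Algebra K A] (W : Submodule K A) {n : ℕ} (hn : n ≠ 0) {u : A} :
    (n : A) * u ∈ W ↔ u ∈ W := by
  rw [← nsmul_eq_mul, ← Nat.cast_smul_eq_nsmul K, W.smul_mem_iff (Nat.cast_ne_zero.mpr hn)]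

theorem Ideal.natCast_mul_mem_iff {K A : Type*} [Field K] [CharZero K] [CommRing A]
    [Algebra K A] (I : Ideal A) {n : ℕ} (hn : n ≠ 0) {u : A} : (n : A) * u ∈ I ↔ u ∈ I :=
  (I.restrictScalars K).natCast_mul_mem_iff hn

theorem Submodule.finrank_quotient_eq_card {K V ι : Type*} [Field K] [AddCommGroup V]
    [Module K V] [Fintype ι] [DecidableEq ι] (W : Submodule K V) (v : ι → V)
    (φ : ι → V →ₗ[K] K) (hspan : W ⊔ span K (Set.range v) = ⊤) (hW : ∀ i, ∀ w ∈ W, φ i w = 0)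
    (hφv : ∀ i j, φ i (v j) = if i = j then 1 else 0) :
    Module.finrank K (V ⧸ W) = Fintype.card ι := by
  have hli : LinearIndependent K (W.mkQ ∘ v) := by
    refine Fintype.linearIndependent_iff.mpr fun g hg i => ?_
    have hmem : ∑ j, g j • v j ∈ W := by
      rw [← W.ker_mkQ, LinearMap.mem_ker]
      simpa [map_sum] using hg
    simpa [hφv] using hW i _ hmem
  have hsp : ⊤ ≤ span K (Set.range (W.mkQ ∘ v)) := by
    rw [Set.range_comp, ← Submodule.map_span, (Submodule.map_mkQ_eq_top _ _).mpr hspan]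
  rw [Module.finrank_eq_card_basis (Module.Basis.mk hli hsp)]

namespace MvPowerSeries

variable {σ R : Type*}

theorem coeff_mul_eq_constantCoeff_mul [CommSemiring R] {α : σ →₀ ℕ} {s : MvPowerSeries σ R}
    (hs : ∀ γ < α, coeff γ s = 0) (h : MvPowerSeries σ R) :
    coeff α (h * s) = constantCoeff h * coeff α s := by
  classical
  rw [coeff_mul, Finset.sum_eq_single_of_mem (0, α) (by simp), coeff_zero_eq_constantCoeff]
  rintro ⟨δ, γ⟩ hδγ hne
  rw [Finset.HasAntidiagonal.mem_antidiagonal] at hδγ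
  have hγ : γ < α := lt_of_le_of_ne (hδγ ▸ le_add_self) fun h => hne (by subst h; simp_all)
  rw [hs γ hγ, mul_zero]

variable [Finite σ] [CommRing R]

theorem sub_truncTotal_mem_span_monomial (N : ℕ) (f : MvPowerSeries σ R) :
    f - truncTotal N f ∈ Ideal.span ((monomial · (1 : R)) '' {β : σ →₀ ℕ | β.degree = N}) := by
  classical
  have hc (α : σ →₀ ℕ) : ∃ β, N ≤ α.degree → β ≤ α ∧ β.degree = N := by
    by_cases h : N ≤ α.degree
    · exact (exists_le_degree_eq α N h).imp fun _ h' _ => h'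
    · exact ⟨0, fun h' => absurd h' h⟩
  choose c hc using hc
  -- `c α ≤ α` has degree `N`; `cofactor β` collects the terms `X^α` of `f` with `c α = β`,
  -- divided by `X^β`.
  let cofactor (β : σ →₀ ℕ) : MvPowerSeries σ R := fun γ =>
    if N ≤ (γ + β).degree ∧ c (γ + β) = β then coeff (γ + β) f else 0
  have coeff_cofactor (β γ) : coeff γ (cofactor β) =
      if N ≤ (γ + β).degree ∧ c (γ + β) = β then coeff (γ + β) f else 0 := rfl
  have coeff_term (α β) : coeff α (monomial β 1 * cofactor β) =
      if N ≤ α.degree ∧ c α = β then coeff α f else 0 := by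
    rw [coeff_monomial_mul, one_mul]
    split_ifs with hβ h h
    · rw [coeff_cofactor, tsub_add_cancel_of_le hβ, if_pos h]
    · rw [coeff_cofactor, tsub_add_cancel_of_le hβ, if_neg h]
    · exact absurd (h.2 ▸ (hc α h.1).1) hβ
    · rfl
  have key : f - truncTotal N f =
      ∑ β ∈ (finite_of_degree_eq N).toFinset, monomial β 1 * cofactor β := by
    ext α
    simp_rw [map_sub, map_sum, coeff_term, MvPolynomial.coeff_coe, coeff_truncTotal_eq_ite]
    by_cases hα : N ≤ α.degree
    · rw [if_neg (not_lt.mpr hα), sub_zero, Finset.sum_eq_single_of_mem (c α)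
        (by simpa using (hc α hα).2) (fun β _ hβ => if_neg fun h => hβ h.2.symm),
        if_pos ⟨hα, rfl⟩]
    · simp [hα, not_le.mp hα]
  rw [key]
  refine Ideal.sum_mem _ fun β hβ => Ideal.mul_mem_right _ _ (Ideal.subset_span ⟨β, ?_, rfl⟩)
  simpa using hβ

theorem restrictScalars_sup_span_monomial_eq_top {I : Ideal (MvPowerSeries σ R)} {N : ℕ}
    (hI : ∀ β : σ →₀ ℕ, β.degree = N → monomial β 1 ∈ I) :
    I.restrictScalars R ⊔
      Submodule.span R ((monomial · (1 : R)) '' {α : σ →₀ ℕ | α.degree < N}) = ⊤ := by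
  refine Submodule.eq_top_iff'.mpr fun f => ?_
  rw [← sub_add_cancel f (truncTotal N f : MvPowerSeries σ R)]
  refine Submodule.add_mem_sup ?_ ?_
  · exact (Ideal.span_le.mpr (by rintro _ ⟨β, hβ, rfl⟩; exact hI β hβ))
      (sub_truncTotal_mem_span_monomial N f)
  · rw [truncTotal, truncFinset_apply, ← MvPolynomial.coeToMvPowerSeries.ringHom_apply, map_sum]
    refine Submodule.sum_mem _ fun α hα => ?_
    rw [MvPolynomial.coeToMvPowerSeries.ringHom_apply, MvPolynomial.coe_monomial,
      ← mul_one (coeff α f), ← smul_eq_mul, map_smul]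
    exact Submodule.smul_mem _ _ (Submodule.subset_span ⟨α, by simpa using hα, rfl⟩)

end MvPowerSeries

namespace FT

local notation "R₃" => MvPowerSeries (Fin 3) ℂ

theorem pd_eq_pderiv (i : Fin 3) (f : R₃) : pd i f = pderiv ℂ i f := by
  ext α
  rw [coeff_pderiv, mul_comm]
  rfl

noncomputable def expo (a b c : ℕ) : Fin 3 →₀ ℕ := single 0 a + single 1 b + single 2 c

noncomputable def mono (a b c : ℕ) : R₃ := monomial (expo a b c) 1

@[simp] theorem expo_apply_zero (a b c : ℕ) : expo a b c 0 = a := by simp [expo]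
@[simp] theorem expo_apply_one (a b c : ℕ) : expo a b c 1 = b := by simp [expo]
@[simp] theorem expo_apply_two (a b c : ℕ) : expo a b c 2 = c := by simp [expo]

theorem eq_iff_coords {β β' : Fin 3 →₀ ℕ} : β = β' ↔ β 0 = β' 0 ∧ β 1 = β' 1 ∧ β 2 = β' 2 := by
  simp [Finsupp.ext_iff, Fin.forall_fin_succ]

theorem le_iff_coords {β β' : Fin 3 →₀ ℕ} : β ≤ β' ↔ β 0 ≤ β' 0 ∧ β 1 ≤ β' 1 ∧ β 2 ≤ β' 2 :=
  ⟨fun h => ⟨h 0, h 1, h 2⟩, fun h i => by fin_cases i <;> simp [h]⟩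

theorem mono_eq (a b c : ℕ) : mono a b c = X 0 ^ a * X 1 ^ b * X 2 ^ c := by
  simp only [mono, expo, X_pow_eq, monomial_mul_monomial, mul_one]

theorem monomial_eq_mono (β : Fin 3 →₀ ℕ) : monomial β (1 : ℂ) = mono (β 0) (β 1) (β 2) := by
  rw [mono, ← eq_iff_coords.mpr ⟨(expo_apply_zero ..).symm, (expo_apply_one ..).symm,
    (expo_apply_two ..).symm⟩]

theorem coeff_mono (γ : Fin 3 →₀ ℕ) (a b c : ℕ) :
    coeff γ (mono a b c) = if γ 0 = a ∧ γ 1 = b ∧ γ 2 = c then 1 else 0 := by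
  simp [mono, coeff_monomial, eq_iff_coords]

noncomputable def generators (p q : ℕ) : Set R₃ :=
  {mono 1 1 0 + mono 0 0 (q + 3),
   mono 1 0 1 + mono 0 1 2 + mono 0 (p + 4) 0,
   mono 0 1 2 + (p + 4) • mono 0 (p + 4) 0 - mono 1 0 1,
   mono 2 0 0 + 2 • mono 1 1 1 - (q + 3) • mono 0 0 (q + 4)
     - ((q + 3) * (p + 4)) • mono 0 (p + 3) (q + 2),
   mono 1 1 0 + 2 • mono 0 2 1 - (q + 3) • mono 0 0 (q + 3)}

noncomputable def ideal (p q : ℕ) : Ideal R₃ := Ideal.span (generators p q)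

theorem span_jacobianMinors_eq_ideal {p q : ℕ} {f g : R₃}
    (hf : f = X 0 * X 1 + X 2 ^ (q + 3)) (hg : g = X 0 * X 2 + X 1 * X 2 ^ 2 + X 1 ^ (p + 4)) :
    Ideal.span {f, g, pd 0 f * pd 1 g - pd 1 f * pd 0 g, pd 1 f * pd 2 g - pd 2 f * pd 1 g,
      pd 0 f * pd 2 g - pd 2 f * pd 0 g} = ideal p q := by
  subst hf hg
  simp [pd_eq_pderiv, ideal, generators, mono_eq, nsmul_eq_mul]
  ring_nf

section Membership

variable (p q : ℕ)

local notation "x" => (X 0 : R₃)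
local notation "y" => (X 1 : R₃)
local notation "z" => (X 2 : R₃)
local notation "I" => ideal p q

theorem f_mem : x * y + z ^ (q + 3) ∈ I :=
  Ideal.subset_span (by simp [generators, mono_eq, nsmul_eq_mul])

theorem g_mem : x * z + y * z ^ 2 + y ^ (p + 4) ∈ I :=
  Ideal.subset_span (by simp [generators, mono_eq, nsmul_eq_mul])

theorem m₁_mem : y * z ^ 2 + (p + 4) * y ^ (p + 4) - x * z ∈ I :=
  Ideal.subset_span (by simp [generators, mono_eq, nsmul_eq_mul])

theorem m₂_mem : x ^ 2 + 2 * (x * y * z) - (q + 3) * z ^ (q + 4)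
    - (q + 3) * (p + 4) * (y ^ (p + 3) * z ^ (q + 2)) ∈ I :=
  Ideal.subset_span (by simp [generators, mono_eq, nsmul_eq_mul])

theorem m₃_mem : x * y + 2 * (y ^ 2 * z) - (q + 3) * z ^ (q + 3) ∈ I :=
  Ideal.subset_span (by simp [generators, mono_eq, nsmul_eq_mul])

theorem x_z_rel_mem : 2 * x * z - (p + 3) * y ^ (p + 4) ∈ I := by
  convert sub_mem (g_mem p q) (m₁_mem p q) using 1; ring

theorem y_z_sq_rel_mem : 2 * y * z ^ 2 + (p + 5) * y ^ (p + 4) ∈ I := by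
  convert add_mem (g_mem p q) (m₁_mem p q) using 1; ring

theorem y_sq_z_rel_mem : 2 * y ^ 2 * z - (q + 4) * z ^ (q + 3) ∈ I := by
  convert sub_mem (m₃_mem p q) (f_mem p q) using 1; ring

theorem y_pow_mem : y ^ (p + 5) ∈ I := by
  have h₁ := sub_mem (Ideal.mul_mem_left _ (2 * z) (f_mem p q))
    (Ideal.mul_mem_left _ y (x_z_rel_mem p q))
  have h₂ := sub_mem (Ideal.mul_mem_left _ y (y_z_sq_rel_mem p q))
    (Ideal.mul_mem_left _ z (y_sq_z_rel_mem p q))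
  -- `h₁` and `h₂` are two relations between `z^(q+4)` and `y^(p+5)`; this is their determinant.
  have hd : p * q + 3 * q + 2 * p + 2 ≠ 0 := by omega
  rw [← Ideal.natCast_mul_mem_iff (K := ℂ) _ hd]
  convert sub_mem (Ideal.mul_mem_left _ (q + 4 : R₃) h₁) (Ideal.mul_mem_left _ 2 h₂) using 1
  push_cast; ring

theorem z_pow_mem : z ^ (q + 4) ∈ I := by
  rw [← Ideal.natCast_mul_mem_iff (K := ℂ) _ two_ne_zero]
  have h := sub_mem (Ideal.mul_mem_left _ (2 * z) (f_mem p q))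
    (Ideal.mul_mem_left _ y (x_z_rel_mem p q))
  convert sub_mem h (Ideal.mul_mem_left _ (p + 3 : R₃) (y_pow_mem p q)) using 1
  push_cast; ring

theorem y_sq_z_sq_mem : y ^ 2 * z ^ 2 ∈ I := by
  rw [← Ideal.natCast_mul_mem_iff (K := ℂ) _ two_ne_zero]
  convert sub_mem (Ideal.mul_mem_left _ y (y_z_sq_rel_mem p q))
    (Ideal.mul_mem_left _ (p + 5 : R₃) (y_pow_mem p q)) using 1
  push_cast; ring

theorem y_z_cube_mem : y * z ^ 3 ∈ I := by
  rw [← Ideal.natCast_mul_mem_iff (K := ℂ) _ four_ne_zero]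
  have h := add_mem (Ideal.mul_mem_left _ (y ^ (p + 2)) (y_sq_z_rel_mem p q))
    (Ideal.mul_mem_left _ ((q + 4) * y ^ p * z ^ (q + 1)) (y_sq_z_sq_mem p q))
  convert sub_mem (Ideal.mul_mem_left _ (2 * z) (y_z_sq_rel_mem p q))
    (Ideal.mul_mem_left _ (p + 5 : R₃) h) using 1
  push_cast; ring

theorem y_cube_z_mem : y ^ 3 * z ∈ I := by
  rw [← Ideal.natCast_mul_mem_iff (K := ℂ) _ two_ne_zero]
  convert add_mem (Ideal.mul_mem_left _ y (y_sq_z_rel_mem p q))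
    (Ideal.mul_mem_left _ ((q + 4) * z ^ q) (y_z_cube_mem p q)) using 1
  push_cast; ring

theorem x_y_z_mem : x * y * z ∈ I := by
  convert sub_mem (Ideal.mul_mem_left _ z (f_mem p q)) (z_pow_mem p q) using 1; ring

theorem x_sq_mem : x ^ 2 ∈ I := by
  have h := add_mem (Ideal.mul_mem_left _ (q + 3 : R₃) (z_pow_mem p q))
    (Ideal.mul_mem_left _ ((q + 3) * (p + 4) * y ^ (p + 1) * z ^ q) (y_sq_z_sq_mem p q))
  convert add_mem (sub_mem (m₂_mem p q) (Ideal.mul_mem_left _ 2 (x_y_z_mem p q))) h using 1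
  ring

theorem x_y_sq_mem : x * y ^ 2 ∈ I := by
  convert sub_mem (Ideal.mul_mem_left _ y (f_mem p q))
    (Ideal.mul_mem_left _ (z ^ q) (y_z_cube_mem p q)) using 1
  ring

theorem x_z_sq_mem : x * z ^ 2 ∈ I := by
  rw [← Ideal.natCast_mul_mem_iff (K := ℂ) _ two_ne_zero]
  convert add_mem (Ideal.mul_mem_left _ z (x_z_rel_mem p q))
    (Ideal.mul_mem_left _ ((p + 3) * y ^ (p + 1)) (y_cube_z_mem p q)) using 1
  push_cast; ring

theorem mono_mem_ideal {a b c : ℕ} (h : 2 ≤ a ∨ (1 ≤ a ∧ 2 ≤ b) ∨ (1 ≤ a ∧ 1 ≤ b ∧ 1 ≤ c) ∨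
    (1 ≤ a ∧ 2 ≤ c) ∨ p + 5 ≤ b ∨ q + 4 ≤ c ∨ (2 ≤ b ∧ 2 ≤ c) ∨ (1 ≤ b ∧ 3 ≤ c) ∨
    (3 ≤ b ∧ 1 ≤ c)) : mono a b c ∈ I := by
  have dvd {a₀ b₀ c₀ : ℕ} (h₀ : x ^ a₀ * y ^ b₀ * z ^ c₀ ∈ I) (ha : a₀ ≤ a) (hb : b₀ ≤ b)
      (hc : c₀ ≤ c) : mono a b c ∈ I :=
    mono_eq a b c ▸ Ideal.mem_of_dvd _ (mul_dvd_mul (mul_dvd_mul (pow_dvd_pow _ ha)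
      (pow_dvd_pow _ hb)) (pow_dvd_pow _ hc)) h₀
  rcases h with h | ⟨ha, hb⟩ | ⟨ha, hb, hc⟩ | ⟨ha, hc⟩ | h | h | ⟨hb, hc⟩ | ⟨hb, hc⟩ | ⟨hb, hc⟩
  · exact dvd (b₀ := 0) (c₀ := 0) (by simpa using x_sq_mem p q) h b.zero_le c.zero_le
  · exact dvd (c₀ := 0) (by simpa using x_y_sq_mem p q) ha hb c.zero_le
  · exact dvd (by simpa using x_y_z_mem p q) ha hb hc
  · exact dvd (b₀ := 0) (by simpa using x_z_sq_mem p q) ha b.zero_le hc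
  · exact dvd (a₀ := 0) (c₀ := 0) (by simpa using y_pow_mem p q) a.zero_le h c.zero_le
  · exact dvd (a₀ := 0) (b₀ := 0) (by simpa using z_pow_mem p q) a.zero_le b.zero_le h
  · exact dvd (a₀ := 0) (by simpa using y_sq_z_sq_mem p q) a.zero_le hb hc
  · exact dvd (a₀ := 0) (by simpa using y_z_cube_mem p q) a.zero_le hb hc
  · exact dvd (a₀ := 0) (by simpa using y_cube_z_mem p q) a.zero_le hb hc

theorem monomial_mem_ideal {β : Fin 3 →₀ ℕ} (hβ : β.degree = p + q + 5) : monomial β 1 ∈ I := by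
  rw [degree_eq_sum, Fin.sum_univ_three] at hβ
  rw [monomial_eq_mono]
  exact mono_mem_ideal p q (by omega)

end Membership

noncomputable def stdExps (p q : ℕ) : Finset (Fin 3 →₀ ℕ) :=
  {expo 1 0 0, expo 0 1 1} ∪ (Finset.range (p + 5)).image (expo 0 · 0) ∪
    (Finset.Icc 1 (q + 3)).image (expo 0 0 ·)

theorem mem_stdExps {p q : ℕ} {β : Fin 3 →₀ ℕ} : β ∈ stdExps p q ↔
    (β 0 = 1 ∧ β 1 = 0 ∧ β 2 = 0) ∨ (β 0 = 0 ∧ β 1 = 1 ∧ β 2 = 1) ∨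
    (β 0 = 0 ∧ β 1 ≤ p + 4 ∧ β 2 = 0) ∨ (β 0 = 0 ∧ β 1 = 0 ∧ 1 ≤ β 2 ∧ β 2 ≤ q + 3) := by
  simp only [stdExps, Finset.mem_union, Finset.mem_insert, Finset.mem_singleton,
    Finset.mem_image, Finset.mem_range, Finset.mem_Icc, eq_iff_coords, expo_apply_zero,
    expo_apply_one, expo_apply_two]
  constructor
  · rintro (((h | h) | ⟨b, hb, h⟩) | ⟨c, hc, h⟩) <;> omega
  · rintro (h | h | h | h)
    · exact Or.inl (Or.inl (Or.inl (by omega)))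
    · exact Or.inl (Or.inl (Or.inr (by omega)))
    · exact Or.inl (Or.inr ⟨β 1, by omega, by omega⟩)
    · exact Or.inr ⟨β 2, by omega, by omega⟩

theorem card_stdExps (p q : ℕ) : (stdExps p q).card = p + q + 10 := by
  have hy : Function.Injective (expo 0 · 0) := fun b b' h => by simpa using congr($h 1)
  have hz : Function.Injective (expo 0 0 ·) := fun c c' h => by simpa using congr($h 2)
  rw [stdExps, Finset.card_union_of_disjoint, Finset.card_union_of_disjoint,
    Finset.card_image_of_injective _ hy, Finset.card_image_of_injective _ hz,
    Finset.card_pair (by simp [eq_iff_coords]), Finset.card_range, Nat.card_Icc]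
  · omega
  all_goals
    simp only [Finset.disjoint_left, Finset.mem_union, Finset.mem_insert, Finset.mem_singleton,
      Finset.mem_image, Finset.mem_range, Finset.mem_Icc]
    rintro _ h ⟨_, _, rfl⟩
    simp only [eq_iff_coords, expo_apply_zero, expo_apply_one, expo_apply_two] at h
    grind

noncomputable def stdSpan (p q : ℕ) : Submodule ℂ R₃ :=
  (ideal p q).restrictScalars ℂ ⊔
    Submodule.span ℂ (Set.range fun β : stdExps p q => monomial β.1 (1 : ℂ))

section Spanning

variable (p q : ℕ)

theorem mem_stdSpan_of_mem_ideal {u : R₃} (hu : u ∈ ideal p q) : u ∈ stdSpan p q :=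
  Submodule.mem_sup_left hu

theorem mono_mem_stdSpan_of_mem_stdExps {a b c : ℕ} (h : expo a b c ∈ stdExps p q) :
    mono a b c ∈ stdSpan p q :=
  Submodule.mem_sup_right (Submodule.subset_span ⟨⟨_, h⟩, rfl⟩)

theorem y_pow_mem_stdSpan : mono 0 (p + 4) 0 ∈ stdSpan p q :=
  mono_mem_stdSpan_of_mem_stdExps p q (by simp [mem_stdExps])

theorem z_pow_mem_stdSpan : mono 0 0 (q + 3) ∈ stdSpan p q :=
  mono_mem_stdSpan_of_mem_stdExps p q (by simp [mem_stdExps])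

theorem x_y_mem_stdSpan : mono 1 1 0 ∈ stdSpan p q := by
  convert sub_mem (mem_stdSpan_of_mem_ideal p q (f_mem p q)) (z_pow_mem_stdSpan p q) using 1
  simp [mono_eq]

theorem x_z_mem_stdSpan : mono 1 0 1 ∈ stdSpan p q := by
  rw [← (stdSpan p q).natCast_mul_mem_iff two_ne_zero]
  convert add_mem (mem_stdSpan_of_mem_ideal p q (x_z_rel_mem p q))
    (((stdSpan p q).natCast_mul_mem_iff (n := p + 3) (by omega)).mpr
      (y_pow_mem_stdSpan p q)) using 1
  simp [mono_eq]; ring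

theorem y_sq_z_mem_stdSpan : mono 0 2 1 ∈ stdSpan p q := by
  rw [← (stdSpan p q).natCast_mul_mem_iff two_ne_zero]
  convert add_mem (mem_stdSpan_of_mem_ideal p q (y_sq_z_rel_mem p q))
    (((stdSpan p q).natCast_mul_mem_iff (n := q + 4) (by omega)).mpr
      (z_pow_mem_stdSpan p q)) using 1
  simp [mono_eq]; ring

theorem y_z_sq_mem_stdSpan : mono 0 1 2 ∈ stdSpan p q := by
  rw [← (stdSpan p q).natCast_mul_mem_iff two_ne_zero]
  convert sub_mem (mem_stdSpan_of_mem_ideal p q (y_z_sq_rel_mem p q))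
    (((stdSpan p q).natCast_mul_mem_iff (n := p + 5) (by omega)).mpr
      (y_pow_mem_stdSpan p q)) using 1
  simp [mono_eq]; ring

theorem mono_mem_stdSpan (a b c : ℕ) : mono a b c ∈ stdSpan p q := by
  have lead {a b c : ℕ} (h) : mono a b c ∈ stdSpan p q :=
    mem_stdSpan_of_mem_ideal p q (mono_mem_ideal p q h)
  have std {a b c : ℕ} (h : expo a b c ∈ stdExps p q) : mono a b c ∈ stdSpan p q :=
    mono_mem_stdSpan_of_mem_stdExps p q h
  match a, b, c with
  | _ + 2, _, _ => exact lead (by omega)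
  | 1, _ + 2, _ => exact lead (by omega)
  | 1, 1, _ + 1 => exact lead (by omega)
  | 1, 0, _ + 2 => exact lead (by omega)
  | 1, 0, 0 => exact std (by simp [mem_stdExps])
  | 1, 1, 0 => exact x_y_mem_stdSpan p q
  | 1, 0, 1 => exact x_z_mem_stdSpan p q
  | 0, 2, 1 => exact y_sq_z_mem_stdSpan p q
  | 0, 1, 2 => exact y_z_sq_mem_stdSpan p q
  | 0, 1, 1 => exact std (by simp [mem_stdExps])
  | 0, _ + 3, 1 => exact lead (by omega)
  | 0, 1, _ + 3 => exact lead (by omega)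
  | 0, _ + 2, _ + 2 => exact lead (by omega)
  | 0, b, 0 =>
    by_cases hb : b ≤ p + 4
    · exact std (by simp [mem_stdExps, hb])
    · exact lead (by omega)
  | 0, 0, c + 1 =>
    by_cases hc : c + 1 ≤ q + 3
    · exact std (by simp [mem_stdExps, hc])
    · exact lead (by omega)

theorem stdSpan_eq_top : stdSpan p q = ⊤ := by
  rw [eq_top_iff, ← restrictScalars_sup_span_monomial_eq_top fun _ => monomial_mem_ideal p q]
  refine sup_le le_sup_left (Submodule.span_le.mpr ?_)
  rintro _ ⟨β, -, rfl⟩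
  show monomial β (1 : ℂ) ∈ _
  rw [monomial_eq_mono]
  exact mono_mem_stdSpan p q _ _ _

end Spanning

theorem coeff_generator_eq_zero_of_lt {p q : ℕ} {s : R₃} (hs : s ∈ generators p q)
    {α γ : Fin 3 →₀ ℕ} (hα : α ∈ stdExps p q ∨ α = expo 0 1 2 ∨ α = expo 1 0 1 ∨
      α = expo 0 2 1 ∨ α = expo 1 1 0) (hγ : γ < α) : coeff γ s = 0 := by
  have hle := le_iff_coords.mp hγ.le
  have hne := mt eq_iff_coords.mpr hγ.ne
  simp only [mem_stdExps, eq_iff_coords (β := α), expo_apply_zero, expo_apply_one,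
    expo_apply_two] at hα
  rcases hs with rfl | rfl | rfl | rfl | rfl <;>
    simp only [map_add, map_sub, map_nsmul, coeff_mono] <;> split_ifs <;> first | omega | simp

theorem coeff_generator_eq_zero {p q : ℕ} {s : R₃} (hs : s ∈ generators p q)
    {β : Fin 3 →₀ ℕ} (hβ : β ∈ stdExps p q) (hy : β ≠ expo 0 (p + 4) 0)
    (hz : β ≠ expo 0 0 (q + 3)) : coeff β s = 0 := by
  simp only [mem_stdExps] at hβ
  simp only [ne_eq, eq_iff_coords (β := β), expo_apply_zero, expo_apply_one,
    expo_apply_two] at hy hz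
  rcases hs with rfl | rfl | rfl | rfl | rfl <;>
    simp only [map_add, map_sub, map_nsmul, coeff_mono] <;> split_ifs <;> first | omega | simp

-- The corrections are the combinations of coefficients annihilating `g` and `M₁`
-- (at `y^(p+4)`), resp. `f` and `M₃` (at `z^(q+3)`).
noncomputable def dual (p q : ℕ) (β : Fin 3 →₀ ℕ) : R₃ →ₗ[ℂ] ℂ :=
  if β = expo 0 (p + 4) 0 then
    coeff β - ((p + 5) / 2 : ℂ) • coeff (expo 0 1 2) + ((p + 3) / 2 : ℂ) • coeff (expo 1 0 1)
  else if β = expo 0 0 (q + 3) then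
    coeff β + ((q + 4) / 2 : ℂ) • coeff (expo 0 2 1) - coeff (expo 1 1 0)
  else coeff β

theorem dual_eq_zero_of_mem_ideal {p q : ℕ} {β : Fin 3 →₀ ℕ} (hβ : β ∈ stdExps p q) {u : R₃}
    (hu : u ∈ ideal p q) : dual p q β u = 0 := by
  refine Ideal.map_eq_zero_of_mem_span _ (fun s hs h => ?_) hu
  have hmul := fun α hα => coeff_mul_eq_constantCoeff_mul (α := α)
    (fun γ hγ => coeff_generator_eq_zero_of_lt (p := p) (q := q) hs hα hγ) h
  unfold dual
  split_ifs with hy hz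
  rotate_left 2
  · rw [hmul _ (Or.inl hβ), coeff_generator_eq_zero hs hβ hy hz, mul_zero]
  all_goals
    simp only [LinearMap.add_apply, LinearMap.sub_apply, LinearMap.smul_apply, smul_eq_mul]
    rw [hmul _ (Or.inl hβ), hmul _ (by simp), hmul _ (by simp)]
    subst β
    rcases hs with rfl | rfl | rfl | rfl | rfl <;>
      simp only [map_add, map_sub, map_nsmul, coeff_mono, expo_apply_zero, expo_apply_one,
        expo_apply_two] <;> norm_num <;> ring

theorem dual_monomial {p q : ℕ} {β β' : Fin 3 →₀ ℕ} (hβ' : β' ∈ stdExps p q) :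
    dual p q β (monomial β' 1) = if β = β' then 1 else 0 := by
  simp only [mem_stdExps] at hβ'
  have off (a b c : ℕ) (h : (a = 0 ∧ b = 1 ∧ c = 2) ∨ (a = 1 ∧ b = 0 ∧ c = 1) ∨
      (a = 0 ∧ b = 2 ∧ c = 1) ∨ (a = 1 ∧ b = 1 ∧ c = 0)) :
      coeff (expo a b c) (monomial β' (1 : ℂ)) = 0 := by
    rw [coeff_monomial, if_neg]
    rw [eq_iff_coords, expo_apply_zero, expo_apply_one, expo_apply_two]
    omega
  rw [← coeff_monomial]
  unfold dual
  split_ifs <;> simp [off 0 1 2, off 1 0 1, off 0 2 1, off 1 1 0]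

theorem finrank_quotient_ideal (p q : ℕ) : Module.finrank ℂ (R₃ ⧸ ideal p q) = p + q + 10 := by
  rw [← (Submodule.Quotient.restrictScalarsEquiv ℂ (ideal p q)).finrank_eq,
    Submodule.finrank_quotient_eq_card _ _ (fun β : stdExps p q => dual p q β.1)
      (stdSpan_eq_top p q) (fun β _ => dual_eq_zero_of_mem_ideal β.2)
      (fun β β' => by simp only [dual_monomial β'.2, ← Subtype.ext_iff]),
    Fintype.card_coe, card_stdExps]

end FT

open MvPowerSeries in
theorem tjurina_FT_general (k l : ℕ) (hl : 4 ≤ l) (hk : 5 ≤ k)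
    (f g M₁ M₂ M₃ : MvPowerSeries (Fin 3) ℂ)
    (hf : f = X 0 * X 1 + X 2 ^ (l - 1))
    (hg : g = X 0 * X 2 + X 1 * X 2 ^ 2 + X 1 ^ (k - 1))
    (hM₁ : M₁ = pd 0 f * pd 1 g - pd 1 f * pd 0 g)
    (hM₂ : M₂ = pd 1 f * pd 2 g - pd 2 f * pd 1 g)
    (hM₃ : M₃ = pd 0 f * pd 2 g - pd 2 f * pd 0 g) :
    Module.finrank ℂ
      (MvPowerSeries (Fin 3) ℂ ⧸ Ideal.span {f, g, M₁, M₂, M₃}) = k + l + 1 := by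
  obtain ⟨p, rfl⟩ : ∃ p, k = p + 5 := ⟨k - 5, by omega⟩
  obtain ⟨q, rfl⟩ : ∃ q, l = q + 4 := ⟨l - 4, by omega⟩
  subst hM₁ hM₂ hM₃
  rw [FT.span_jacobianMinors_eq_ideal hf hg, FT.finrank_quotient_ideal]
  ring

open MvPowerSeries in
/-- Pfister–Schönemann: the Tjurina number of the space curve singularity FT_{k,l}
(f = xy + z^{l−1}, g = xz + yz² + y^{k−1}, 4 ≤ l ≤ k, 5 ≤ k) equals k + l + 1. -/
theorem tjurina_FT (k l : ℕ) (hl : 4 ≤ l) (hlk : l ≤ k) (hk : 5 ≤ k)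
    (f g M₁ M₂ M₃ : MvPowerSeries (Fin 3) ℂ)
    (hf : f = X 0 * X 1 + X 2 ^ (l - 1))
    (hg : g = X 0 * X 2 + X 1 * X 2 ^ 2 + X 1 ^ (k - 1))
    (hM₁ : M₁ = pd 0 f * pd 1 g - pd 1 f * pd 0 g)
    (hM₂ : M₂ = pd 1 f * pd 2 g - pd 2 f * pd 1 g)
    (hM₃ : M₃ = pd 0 f * pd 2 g - pd 2 f * pd 0 g) :
    Module.finrank ℂ
      (MvPowerSeries (Fin 3) ℂ ⧸ Ideal.span {f, g, M₁, M₂, M₃}) = k + l + 1 :=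
  tjurina_FT_general k l hl hk f g M₁ M₂ M₃ hf hg hM₁ hM₂ hM₃
end

section
/- Let 4 ≤ l ≤ k with 5 ≤ k, f = x·y + z^(l−1) and g = x·z + y·z² + y^(k−1) in ℂ⟦x,y,z⟧. Then for every h in the ideal ⟨f,g⟩ there exist a, b, c ∈ ⟨f,g⟩ such that h = ∂a/∂z + ∂b/∂x + ∂c/∂y. (This is Reiffen's condition ⟨f,g⟩·Ω³ ⊆ d(⟨f,g⟩·Ω²) for exactness of the Poincaré complex of the curve X_{lk} defined by f = g = 0.) -/
namespace MvPowerSeries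

open Finsupp

variable {σ R : Type*}

theorem isWeightedHomogeneous_monomial [Semiring R] (w : σ → ℕ) (d : σ →₀ ℕ) (r : R) :
    (monomial d r).IsWeightedHomogeneous w (weight w d) := fun {e} he ↦ by
  classical
  rw [coeff_monomial] at he
  split_ifs at he with h
  · rw [h]
  · exact absurd rfl he

theorem isWeightedHomogeneous_X_pow [Semiring R] (w : σ → ℕ) (i : σ) (n : ℕ) :
    (X i ^ n : MvPowerSeries σ R).IsWeightedHomogeneous w (n * w i) := by
  rw [X_pow_eq, ← smul_eq_mul, ← weight_single]
  exact isWeightedHomogeneous_monomial w _ _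

theorem isWeightedHomogeneous_X [Semiring R] (w : σ → ℕ) (i : σ) :
    (X i : MvPowerSeries σ R).IsWeightedHomogeneous w (w i) := by
  rw [← pow_one (X i), ← one_mul (w i)]
  exact isWeightedHomogeneous_X_pow w i 1

theorem coeff_pderiv_X_mul [CommSemiring R] (i : σ) (G : MvPowerSeries σ R) (α : σ →₀ ℕ) :
    coeff α (pderiv R i (X i * G)) = coeff α G * (α i + 1) := by
  rw [coeff_pderiv, X_def, add_comm α, coeff_add_monomial_mul, one_mul]

theorem coeff_sum_pderiv_nsmul_X_mul [CommSemiring R] [Fintype σ] (w : σ → ℕ)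
    (G : MvPowerSeries σ R) (α : σ →₀ ℕ) :
    coeff α (∑ i, pderiv R i (w i • (X i * G))) = (weight w α + ∑ i, w i) * coeff α G := by
  simp only [map_sum, map_nsmul, coeff_pderiv_X_mul, weight_eq_sum, smul_eq_mul]
  push_cast
  rw [add_mul, Finset.sum_mul, Finset.sum_mul, ← Finset.sum_add_distrib]
  refine Finset.sum_congr rfl fun i _ ↦ ?_
  ring

variable {K : Type*} [Field K]

/-- The inverse of `E + N` on `MvPowerSeries σ K`, where `E` is the weighted Euler operator
`x^β ↦ weight w β • x^β`; it is a genuine inverse when `N ≠ 0` and `K` has characteristic zero. -/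
noncomputable def weightedEulerInv (w : σ → ℕ) (N : ℕ) (p : MvPowerSeries σ K) :
    MvPowerSeries σ K :=
  fun β ↦ coeff β p / (weight w β + N : ℕ)

theorem coeff_weightedEulerInv (w : σ → ℕ) (N : ℕ) (p : MvPowerSeries σ K) (β : σ →₀ ℕ) :
    coeff β (weightedEulerInv w N p) = coeff β p / (weight w β + N : ℕ) :=
  rfl

/-- Multiplication by a weighted homogeneous `F` of degree `d` shifts the weight of every
monomial by `d`, so it intertwines `E + N` with `E + N + d`. -/
theorem IsWeightedHomogeneous.coeff_weightedEulerInv_mul [CharZero K] {w : σ → ℕ} {N d : ℕ}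
    {F : MvPowerSeries σ K} (hF : F.IsWeightedHomogeneous w d) (hN : N + d ≠ 0)
    (p : MvPowerSeries σ K) (α : σ →₀ ℕ) :
    (weight w α + N : ℕ) * coeff α (weightedEulerInv w (N + d) p * F) = coeff α (p * F) := by
  classical
  rw [coeff_mul, coeff_mul, Finset.mul_sum]
  refine Finset.sum_congr rfl fun ⟨β, γ⟩ hβγ ↦ ?_
  rw [Finset.HasAntidiagonal.mem_antidiagonal] at hβγ
  by_cases hγ : coeff γ F = 0
  · rw [hγ, mul_zero, mul_zero, mul_zero]
  have hweight : weight w α + N = weight w β + (N + d) := by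
    rw [← hβγ, map_add, hF hγ]
    ring
  have hne : ((weight w β + (N + d) : ℕ) : K) ≠ 0 := Nat.cast_ne_zero.mpr (by omega)
  rw [coeff_weightedEulerInv, hweight, ← mul_assoc, mul_div_cancel₀ _ hne]

theorem IsWeightedHomogeneous.mul_eq_sum_pderiv [CharZero K] [Fintype σ] {w : σ → ℕ} {d : ℕ}
    {F : MvPowerSeries σ K} (hF : F.IsWeightedHomogeneous w d) (hd : ∑ i, w i + d ≠ 0)
    (p : MvPowerSeries σ K) :
    p * F = ∑ i, pderiv K i (w i • (X i * (weightedEulerInv w (∑ i, w i + d) p * F))) := by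
  ext α
  rw [coeff_sum_pderiv_nsmul_X_mul, ← hF.coeff_weightedEulerInv_mul hd]
  push_cast
  rfl

/-- Reiffen's condition `I · Ω^n ⊆ d(I · Ω^(n-1))` on the formal germ of `Kⁿ` at `0`,
where `σ` indexes the `n` coordinates: an `(n-1)`-form is a vector field `v` and `d` is
its divergence. -/
def ReiffenCondition [Fintype σ] (I : Ideal (MvPowerSeries σ K)) : Prop :=
  ∀ h ∈ I, ∃ v : σ → MvPowerSeries σ K, (∀ i, v i ∈ I) ∧ h = ∑ i, pderiv K i (v i)

theorem reiffenCondition_span_of_isWeightedHomogeneous [CharZero K] [Fintype σ]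
    {S : Set (MvPowerSeries σ K)}
    (hS : ∀ F ∈ S, ∃ (w : σ → ℕ) (d : ℕ), F.IsWeightedHomogeneous w d ∧ ∑ i, w i + d ≠ 0) :
    ReiffenCondition (Ideal.span S) := by
  intro h hh
  rw [Ideal.span, ← Subtype.range_coe (s := S), Submodule.span_range_eq_iSup] at hh
  refine Submodule.iSup_induction _ (motive := fun h ↦ ∃ v : σ → MvPowerSeries σ K,
    (∀ i, v i ∈ Ideal.span S) ∧ h = ∑ i, pderiv K i (v i)) hh (fun F pF hpF ↦ ?_) ?_
    fun _ _ ih₁ ih₂ ↦ ?_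
  · obtain ⟨w, d, hF, hd⟩ := hS F F.2
    obtain ⟨p, rfl⟩ := Ideal.mem_span_singleton'.mp hpF
    refine ⟨_, fun i ↦ ?_, hF.mul_eq_sum_pderiv hd p⟩
    rw [← mul_assoc]
    exact nsmul_mem (Ideal.mul_mem_left _ _ (Ideal.subset_span F.2)) _
  · exact ⟨0, fun _ ↦ zero_mem _, by simp⟩
  · obtain ⟨v₁, hv₁, rfl⟩ := ih₁
    obtain ⟨v₂, hv₂, rfl⟩ := ih₂
    exact ⟨v₁ + v₂, fun i ↦ add_mem (hv₁ i) (hv₂ i), by simp [Finset.sum_add_distrib]⟩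

end MvPowerSeries

open MvPowerSeries

theorem isWeightedHomogeneous_X_mul_X_add_X_pow (w : Fin 3 → ℕ) (n : ℕ)
    (hw : w 0 + w 1 = n * w 2) :
    (X 0 * X 1 + X 2 ^ n : MvPowerSeries (Fin 3) ℂ).IsWeightedHomogeneous w (n * w 2) :=
  have hxy : (X 0 * X 1 : MvPowerSeries (Fin 3) ℂ).IsWeightedHomogeneous w (n * w 2) :=
    hw ▸ IsWeightedHomogeneous.mul (isWeightedHomogeneous_X w 0) (isWeightedHomogeneous_X w 1)
  hxy.add (isWeightedHomogeneous_X_pow w 2 n)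

theorem isWeightedHomogeneous_X_mul_X_add_X_mul_X_sq_add_X_pow (w : Fin 3 → ℕ) (m : ℕ)
    (hw₀ : w 0 + w 2 = m * w 1) (hw₁ : w 1 + 2 * w 2 = m * w 1) :
    (X 0 * X 2 + X 1 * X 2 ^ 2 + X 1 ^ m : MvPowerSeries (Fin 3) ℂ).IsWeightedHomogeneous w
      (m * w 1) :=
  have hxz : (X 0 * X 2 : MvPowerSeries (Fin 3) ℂ).IsWeightedHomogeneous w (m * w 1) :=
    hw₀ ▸ IsWeightedHomogeneous.mul (isWeightedHomogeneous_X w 0) (isWeightedHomogeneous_X w 2)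
  have hyz : (X 1 * X 2 ^ 2 : MvPowerSeries (Fin 3) ℂ).IsWeightedHomogeneous w (m * w 1) :=
    hw₁ ▸ IsWeightedHomogeneous.mul (isWeightedHomogeneous_X w 1)
      (isWeightedHomogeneous_X_pow w 2 2)
  IsWeightedHomogeneous.add (IsWeightedHomogeneous.add hxz hyz)
    (isWeightedHomogeneous_X_pow w 1 m)

theorem pd_eq_pderiv (i : Fin 3) (f : MvPowerSeries (Fin 3) ℂ) : pd i f = pderiv ℂ i f := by
  ext α
  rw [coeff_pderiv, mul_comm]
  rfl

theorem FT_reiffen_first_condition_general (k l : ℕ) (hk : 5 ≤ k)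
    (f g : MvPowerSeries (Fin 3) ℂ)
    (hf : f = X 0 * X 1 + X 2 ^ (l - 1))
    (hg : g = X 0 * X 2 + X 1 * X 2 ^ 2 + X 1 ^ (k - 1)) :
    ∀ h ∈ Ideal.span {f, g}, ∃ a ∈ Ideal.span {f, g}, ∃ b ∈ Ideal.span {f, g},
      ∃ c ∈ Ideal.span {f, g}, h = pd 2 a + pd 0 b + pd 1 c := by
  have hfg : ReiffenCondition (Ideal.span {f, g}) := by
    refine reiffenCondition_span_of_isWeightedHomogeneous ?_
    rintro F (rfl | rfl)
    · exact ⟨![l - 1, 0, 1], _, hf ▸ isWeightedHomogeneous_X_mul_X_add_X_pow _ _ (by simp),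
        by simp [Fin.sum_univ_three]⟩
    · refine ⟨![k, 2, k - 2], _,
        hg ▸ isWeightedHomogeneous_X_mul_X_add_X_mul_X_sq_add_X_pow _ _ ?_ ?_,
        by simp [Fin.sum_univ_three]⟩ <;> simp <;> omega
  intro h hh
  obtain ⟨v, hv, rfl⟩ := hfg h hh
  refine ⟨v 2, hv 2, v 0, hv 0, v 1, hv 1, ?_⟩
  simp only [pd_eq_pderiv, Fin.sum_univ_three]
  abel

open MvPowerSeries in
/-- Reiffen's first condition ⟨f,g⟩·Ω³ ⊆ d(⟨f,g⟩·Ω²) for the space curve singularity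
FT_{k,l} (f = xy + z^{l−1}, g = xz + yz² + y^{k−1}, 4 ≤ l ≤ k, 5 ≤ k):
every h ∈ ⟨f,g⟩ is of the form ∂a/∂z + ∂b/∂x + ∂c/∂y with a, b, c ∈ ⟨f,g⟩. -/
theorem FT_reiffen_first_condition (k l : ℕ) (hl : 4 ≤ l) (hlk : l ≤ k) (hk : 5 ≤ k)
    (f g : MvPowerSeries (Fin 3) ℂ)
    (hf : f = X 0 * X 1 + X 2 ^ (l - 1))
    (hg : g = X 0 * X 2 + X 1 * X 2 ^ 2 + X 1 ^ (k - 1)) :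
    ∀ h ∈ Ideal.span {f, g}, ∃ a ∈ Ideal.span {f, g}, ∃ b ∈ Ideal.span {f, g},
      ∃ c ∈ Ideal.span {f, g}, h = pd 2 a + pd 0 b + pd 1 c :=
  FT_reiffen_first_condition_general k l hk f g hf hg
end
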